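/- arXiv:1405.1576 — 6 statements merged into one kernel-verified Lean document; each statement's English description precedes it below -/
import Mathlib

section
/- For every ε > 0 there exists N such that every tournament T on n ≥ N vertices satisfies c4(T) ≥ 18·c3(T)²/(1 + 8·c3(T)) − ε, where c3(T) is the fraction of 3-element vertex subsets spanning a cyclic triangle and c4(T) is the fraction of 4-element vertex subsets whose induced subtournament contains a directed 4-cycle. -/
open Finset

/-- A tournament on `Fin n`: an orientation of the complete graph, i.e. no loops and
for all distinct `x, y` exactly one of `r x y`, `r y x` holds. -/
def IsTournament {n : ℕ} (r : Fin n → Fin n → Prop) : Prop :=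
  (∀ x, ¬ r x x) ∧ ∀ x y : Fin n, x ≠ y → ((r x y ∧ ¬ r y x) ∨ (r y x ∧ ¬ r x y))

/-- `s` spans a cyclic triangle: `s = {x,y,z}` with `x→y→z→x`. -/
def IsCyclicTriple {n : ℕ} (r : Fin n → Fin n → Prop) (s : Finset (Fin n)) : Prop :=
  ∃ x y z : Fin n, x ≠ y ∧ y ≠ z ∧ x ≠ z ∧ s = {x, y, z} ∧ r x y ∧ r y z ∧ r z x

/-- `s` spans a transitive triple. -/
def IsTransTriple {n : ℕ} (r : Fin n → Fin n → Prop) (s : Finset (Fin n)) : Prop :=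
  ∃ x y z : Fin n, x ≠ y ∧ y ≠ z ∧ x ≠ z ∧ s = {x, y, z} ∧ r x y ∧ r y z ∧ r x z

/-- `s` contains a directed 4-cycle through all of its (four) elements. -/
def HasCycle4 {n : ℕ} (r : Fin n → Fin n → Prop) (s : Finset (Fin n)) : Prop :=
  ∃ a b c d : Fin n, a ≠ b ∧ a ≠ c ∧ a ≠ d ∧ b ≠ c ∧ b ≠ d ∧ c ≠ d ∧
    s = {a, b, c, d} ∧ r a b ∧ r b c ∧ r c d ∧ r d a

/-- `s` spans a transitive 4-vertex subtournament. -/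
def IsTrans4 {n : ℕ} (r : Fin n → Fin n → Prop) (s : Finset (Fin n)) : Prop :=
  ∃ a b c d : Fin n, a ≠ b ∧ a ≠ c ∧ a ≠ d ∧ b ≠ c ∧ b ≠ d ∧ c ≠ d ∧
    s = {a, b, c, d} ∧ r a b ∧ r a c ∧ r a d ∧ r b c ∧ r b d ∧ r c d

open Classical in
/-- `C3(T)`: number of 3-element vertex subsets spanning a cyclic triangle. -/
noncomputable def cyc3Count {n : ℕ} (r : Fin n → Fin n → Prop) : ℕ :=
  ((univ.powersetCard 3).filter (fun s => IsCyclicTriple r s)).card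

open Classical in
/-- `T3(T)`: number of 3-element vertex subsets spanning a transitive triple. -/
noncomputable def trans3Count {n : ℕ} (r : Fin n → Fin n → Prop) : ℕ :=
  ((univ.powersetCard 3).filter (fun s => IsTransTriple r s)).card

open Classical in
/-- `C4(T)`: number of 4-element vertex subsets containing a directed 4-cycle. -/
noncomputable def cyc4Count {n : ℕ} (r : Fin n → Fin n → Prop) : ℕ :=
  ((univ.powersetCard 4).filter (fun s => HasCycle4 r s)).card

open Classical in
/-- `T4(T)`: number of 4-element vertex subsets spanning a transitive subtournament. -/
noncomputable def trans4Count {n : ℕ} (r : Fin n → Fin n → Prop) : ℕ :=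
  ((univ.powersetCard 4).filter (fun s => IsTrans4 r s)).card

/-!
For an arc `e = (u → v)` let `g e` count the vertices `b` with `v → b → u` and `h e` those with
`u → b → v`. Counting labelled copies of small patterns gives `∑ g = 3 C₃`, `∑ h = T₃`,
`∑ g² = 2 C₄ + 3 C₃`, `∑ g h = 2 C₄` and `∑ h² = 2 T₄ + T₃`, where `T₃`, `T₄` count transitive
triples and transitive 4-sets; moreover `C₃ + T₃ = C(n,3)`, and counting cyclic triangles inside
4-sets gives `(n - 3) C₃ + T₄ = C(n,4) + C₄`. Each of these reduces to a finite check over the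
tournaments on three or four vertices. Cauchy–Schwarz for `(1 + 2 c₃) g + 6 c₃ h` over the at most
`C(n,2)` arcs then yields `c₄ ≥ 18 c₃² / (1 + 8 c₃) - 6 / (n - 3)`.
-/

open Function

namespace Tournament

lemma injective_vec3_iff {α : Type*} {a b c : α} :
    Injective ![a, b, c] ↔ a ≠ b ∧ a ≠ c ∧ b ≠ c := by
  rw [← List.nodup_ofFn]
  simp [and_assoc]

lemma injective_vec4_iff {α : Type*} {a b c d : α} :
    Injective ![a, b, c, d] ↔ a ≠ b ∧ a ≠ c ∧ a ≠ d ∧ b ≠ c ∧ b ≠ d ∧ c ≠ d := by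
  rw [← List.nodup_ofFn]
  simp [and_assoc]

lemma exists_injective_image_eq {α : Type*} [DecidableEq α] {k : ℕ} (s : Finset α)
    (hs : #s = k) : ∃ f : Fin k → α, Injective f ∧ image f univ = s := by
  subst hs
  refine ⟨(↑) ∘ s.equivFin.symm, Subtype.val_injective.comp s.equivFin.symm.injective, ?_⟩
  ext a
  simp only [mem_image, mem_univ, true_and, comp_apply]
  exact ⟨fun ⟨i, hi⟩ => hi ▸ (s.equivFin.symm i).2,
    fun ha => ⟨s.equivFin ⟨a, ha⟩, by simp⟩⟩

lemma image_univ_fin3 {α : Type*} [DecidableEq α] (u : Fin 3 → α) :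
    image u univ = {u 0, u 1, u 2} := by
  ext; simp [Fin.exists_fin_succ, eq_comm]

lemma image_univ_fin4 {α : Type*} [DecidableEq α] (u : Fin 4 → α) :
    image u univ = {u 0, u 1, u 2, u 3} := by
  ext; simp [Fin.exists_fin_succ, eq_comm]

lemma card_mul_card_eq_card_filter_ne_add_card_inter {α : Type*} [DecidableEq α]
    (A B : Finset α) : #A * #B = #{x ∈ A ×ˢ B | x.1 ≠ x.2} + #(A ∩ B) := by
  rw [← card_product, ← card_filter_add_card_filter_not (fun x : α × α => x.1 ≠ x.2)]
  congr 1
  refine card_nbij' Prod.fst (fun a => (a, a)) (fun x hx => ?_) (fun a ha => ?_)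
    (fun x hx => ?_) (fun a _ => rfl)
  · simp only [mem_coe, mem_filter, mem_product, ne_eq, not_not] at hx
    simpa [← hx.2] using hx.1
  · simp_all
  · simp only [mem_coe, mem_filter, mem_product, ne_eq, not_not] at hx
    exact Prod.ext rfl hx.2

section LabelledCopies

variable {α : Type*} [Fintype α] [DecidableEq α] (R : α → α → Prop) [DecidableRel R] {k : ℕ}

def labelledCopies (L : List (Fin k × Fin k)) : Finset (Fin k → α) :=
  {u | Injective u ∧ ∀ p ∈ L, R (u p.1) (u p.2)}

variable {R} {L : List (Fin k × Fin k)}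

lemma mem_labelledCopies {u : Fin k → α} :
    u ∈ labelledCopies R L ↔ Injective u ∧ ∀ p ∈ L, R (u p.1) (u p.2) := by
  simp [labelledCopies]

lemma card_filter_image_eq_card_labelledCopies_comp {f : Fin k → α} (hf : Injective f) :
    #{u ∈ labelledCopies R L | image u univ = image f univ} =
      #(labelledCopies (fun i j => R (f i) (f j)) L) := by
  symm
  refine card_bij (fun σ _ => f ∘ σ) (fun σ hσ => ?_) (fun σ _ τ _ h => hf.comp_left h)
    (fun u hu => ?_)
  · obtain ⟨hσ, hL⟩ := mem_labelledCopies.1 hσ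
    rw [mem_filter, mem_labelledCopies, ← image_image,
      image_univ_of_surjective (Finite.surjective_of_injective hσ)]
    exact ⟨⟨hf.comp hσ, hL⟩, rfl⟩
  · obtain ⟨⟨hu, hL⟩, him⟩ := (mem_filter.1 hu).imp_left mem_labelledCopies.1
    have hrange : Set.range u = Set.range f := by simpa using congrArg ((↑) : _ → Set α) him
    obtain ⟨σ, rfl⟩ := Set.range_subset_range_iff_exists_comp.1 hrange.le
    exact ⟨σ, mem_labelledCopies.2 ⟨hu.of_comp, hL⟩, rfl⟩

lemma card_labelledCopies_eq_sum_card_filter :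
    #(labelledCopies R L) =
      ∑ s ∈ powersetCard k univ, #{u ∈ labelledCopies R L | image u univ = s} := by
  refine card_eq_sum_card_fiberwise fun u hu => ?_
  simp [card_image_of_injective _ (mem_labelledCopies.1 hu).1]

lemma card_labelledCopies_eq_mul_card {P : Finset α → Prop} [DecidablePred P] (c : ℕ)
    (hP : ∀ f : Fin k → α, Injective f →
      #(labelledCopies (fun i j => R (f i) (f j)) L) = if P (image f univ) then c else 0) :
    #(labelledCopies R L) = c * #{s ∈ powersetCard k univ | P s} := by
  rw [card_labelledCopies_eq_sum_card_filter, mul_comm, ← smul_eq_mul, ← sum_const, sum_filter]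
  refine sum_congr rfl fun s hs => ?_
  obtain ⟨f, hf, rfl⟩ := exists_injective_image_eq s (mem_powersetCard.1 hs).2
  rw [card_filter_image_eq_card_labelledCopies_comp hf, hP f hf]

lemma exists_mem_labelledCopies_image_eq_iff {f : Fin k → α} (hf : Injective f) :
    (∃ u ∈ labelledCopies R L, image u univ = image f univ) ↔
      (labelledCopies (fun i j => R (f i) (f j)) L).Nonempty := by
  rw [← filter_nonempty_iff, ← card_pos, card_filter_image_eq_card_labelledCopies_comp hf,
    card_pos]

lemma mem_labelledCopies_map_castSucc {u : Fin (k + 1) → α} :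
    u ∈ labelledCopies R (L.map (Prod.map Fin.castSucc Fin.castSucc)) ↔
      Fin.init u ∈ labelledCopies R L ∧ u (Fin.last k) ∉ Set.range (Fin.init u) := by
  conv_lhs => rw [← Fin.snoc_init_self u]
  simp only [mem_labelledCopies, Fin.snoc_injective_iff, List.forall_mem_map, Prod.map_fst,
    Prod.map_snd, Fin.snoc_castSucc]
  tauto

lemma card_labelledCopies_map_castSucc :
    #(labelledCopies R (L.map (Prod.map Fin.castSucc Fin.castSucc))) =
      #(labelledCopies R L) * (Fintype.card α - k) := by
  rw [card_eq_sum_card_fiberwise (f := Fin.init) (t := labelledCopies R L)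
    (fun u hu => (mem_labelledCopies_map_castSucc.1 hu).1), ← smul_eq_mul, ← sum_const]
  refine sum_congr rfl fun w hw => ?_
  have hfiber : #{u ∈ labelledCopies R (L.map (Prod.map Fin.castSucc Fin.castSucc)) |
      Fin.init u = w} = #(univ \ image w univ) := by
    refine card_bij' (fun u _ => u (Fin.last k)) (fun a _ => Fin.snoc (α := fun _ => α) w a)
      (fun u hu => ?_) (fun a ha => ?_) (fun u hu => ?_) (fun a _ => Fin.snoc_last ..)
    · obtain ⟨hmem, rfl⟩ := mem_filter.1 hu
      simpa using (mem_labelledCopies_map_castSucc.1 hmem).2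
    · have ha : a ∉ Set.range w := by simpa using ha
      simp [mem_labelledCopies_map_castSucc, hw, ha]
    · obtain ⟨-, rfl⟩ := mem_filter.1 hu
      exact Fin.snoc_init_self u
  rw [hfiber, card_sdiff_of_subset (subset_univ _), card_univ,
    card_image_of_injective _ (mem_labelledCopies.1 hw).1, card_univ, Fintype.card_fin]

end LabelledCopies

section Tournaments

variable {n : ℕ} {r : Fin n → Fin n → Prop}

lemma _root_.IsTournament.asymm (hr : IsTournament r) {x y : Fin n} (h : r x y) : ¬ r y x := by
  have hxy : x ≠ y := by rintro rfl; exact hr.1 x h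
  rcases hr.2 x y hxy with h' | h' <;> tauto

lemma _root_.IsTournament.rel_iff_not_rel (hr : IsTournament r) {x y : Fin n} (hxy : x ≠ y) :
    r y x ↔ ¬ r x y := by
  rcases hr.2 x y hxy with h | h <;> tauto

lemma _root_.IsTournament.comp {k : ℕ} (hr : IsTournament r) {f : Fin k → Fin n}
    (hf : Injective f) : IsTournament (fun i j => r (f i) (f j)) :=
  ⟨fun i => hr.1 (f i), fun _ _ hij => hr.2 _ _ (hf.ne hij)⟩

end Tournaments

def boolTournament3 (b01 b02 b12 : Bool) : Fin 3 → Fin 3 → Bool :=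
  ![![false, b01, b02], ![!b01, false, b12], ![!b02, !b12, false]]

def boolTournament4 (b01 b02 b03 b12 b13 b23 : Bool) : Fin 4 → Fin 4 → Bool :=
  ![![false, b01, b02, b03], ![!b01, false, b12, b13], ![!b02, !b12, false, b23],
    ![!b03, !b13, !b23, false]]

lemma _root_.IsTournament.exists_eq_boolTournament3 {R : Fin 3 → Fin 3 → Prop}
    (hR : IsTournament R) :
    ∃ b01 b02 b12, R = (boolTournament3 b01 b02 b12 · · = true) := by
  classical
  refine ⟨R 0 1, R 0 2, R 1 2, ?_⟩
  ext i j
  fin_cases i <;> fin_cases j <;>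
    simp [boolTournament3, hR.1, hR.rel_iff_not_rel (show (0 : Fin 3) ≠ 1 by decide),
      hR.rel_iff_not_rel (show (0 : Fin 3) ≠ 2 by decide),
      hR.rel_iff_not_rel (show (1 : Fin 3) ≠ 2 by decide)]

lemma _root_.IsTournament.exists_eq_boolTournament4 {R : Fin 4 → Fin 4 → Prop}
    (hR : IsTournament R) :
    ∃ b01 b02 b03 b12 b13 b23, R = (boolTournament4 b01 b02 b03 b12 b13 b23 · · = true) := by
  classical
  refine ⟨R 0 1, R 0 2, R 0 3, R 1 2, R 1 3, R 2 3, ?_⟩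
  ext i j
  fin_cases i <;> fin_cases j <;>
    simp [boolTournament4, hR.1, hR.rel_iff_not_rel (show (0 : Fin 4) ≠ 1 by decide),
      hR.rel_iff_not_rel (show (0 : Fin 4) ≠ 2 by decide),
      hR.rel_iff_not_rel (show (0 : Fin 4) ≠ 3 by decide),
      hR.rel_iff_not_rel (show (1 : Fin 4) ≠ 2 by decide),
      hR.rel_iff_not_rel (show (1 : Fin 4) ≠ 3 by decide),
      hR.rel_iff_not_rel (show (2 : Fin 4) ≠ 3 by decide)]

/-- `triangle true` is the cyclic triangle `0 → 1 → 2 → 0`, `triangle false` the transitive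
triangle `0 → 2 → 1` with long edge `0 → 1`. -/
def triangle (t : Bool) : List (Fin 3 × Fin 3) :=
  (0, 1) :: if t then [(1, 2), (2, 0)] else [(0, 2), (2, 1)]

def twoTriangles (t t' : Bool) : List (Fin 4 × Fin 4) :=
  (0, 1) :: (if t then [(1, 2), (2, 0)] else [(0, 2), (2, 1)]) ++
    (if t' then [(1, 3), (3, 0)] else [(0, 3), (3, 1)])

def cycle4 : List (Fin 4 × Fin 4) := [(0, 1), (1, 2), (2, 3), (3, 0)]

def trans4 : List (Fin 4 × Fin 4) := [(0, 1), (0, 2), (0, 3), (1, 2), (1, 3), (2, 3)]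

theorem tournament_census_fin3 {R : Fin 3 → Fin 3 → Prop} [inst : DecidableRel R]
    (hR : IsTournament R) :
    #(labelledCopies R (triangle true)) =
        (if (labelledCopies R (triangle true)).Nonempty then 3 else 0) ∧
    #(labelledCopies R (triangle false)) =
        (if (labelledCopies R (triangle false)).Nonempty then 1 else 0) ∧
    ((labelledCopies R (triangle true)).Nonempty ↔
        ¬ (labelledCopies R (triangle false)).Nonempty) := by
  obtain ⟨b01, b02, b12, rfl⟩ := hR.exists_eq_boolTournament3
  obtain rfl : inst = fun _ _ => instDecidableEqBool _ _ := Subsingleton.elim _ _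
  clear hR
  revert b01 b02 b12
  decide

set_option maxHeartbeats 1000000 in
/-- The last identity: a tournament on four vertices contains no cyclic triangle if it is
transitive, two if it has a Hamiltonian cycle, and one otherwise. -/
theorem tournament_census_fin4 {R : Fin 4 → Fin 4 → Prop} [inst : DecidableRel R]
    (hR : IsTournament R) :
    #(labelledCopies R (twoTriangles true true)) =
        (if (labelledCopies R cycle4).Nonempty then 2 else 0) ∧
    #(labelledCopies R (twoTriangles true false)) =
        (if (labelledCopies R cycle4).Nonempty then 2 else 0) ∧
    #(labelledCopies R (twoTriangles false false)) =
        (if (labelledCopies R trans4).Nonempty then 2 else 0) ∧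
    #(labelledCopies R ((triangle true).map (Prod.map Fin.castSucc Fin.castSucc))) +
        (if (labelledCopies R trans4).Nonempty then 3 else 0) =
      3 + (if (labelledCopies R cycle4).Nonempty then 3 else 0) := by
  obtain ⟨b01, b02, b03, b12, b13, b23, rfl⟩ := hR.exists_eq_boolTournament4
  obtain rfl : inst = fun _ _ => instDecidableEqBool _ _ := Subsingleton.elim _ _
  clear hR
  revert b01 b02 b03 b12 b13 b23
  decide

section Predicates

variable {n : ℕ} {r : Fin n → Fin n → Prop} [DecidableRel r] {s : Finset (Fin n)}

lemma isCyclicTriple_iff :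
    IsCyclicTriple r s ↔ ∃ u ∈ labelledCopies r (triangle true), image u univ = s := by
  constructor
  · rintro ⟨x, y, z, hxy, hyz, hxz, rfl, h1, h2, h3⟩
    refine ⟨![x, y, z], mem_labelledCopies.2 ⟨injective_vec3_iff.2 ⟨hxy, hxz, hyz⟩, ?_⟩, ?_⟩
    · simp [triangle, h1, h2, h3]
    · simp [image_univ_fin3]
  · rintro ⟨u, hu, rfl⟩
    obtain ⟨hinj, hL⟩ := mem_labelledCopies.1 hu
    simp only [triangle, if_true, List.forall_mem_cons] at hL
    exact ⟨u 0, u 1, u 2, hinj.ne (by decide), hinj.ne (by decide), hinj.ne (by decide),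
      image_univ_fin3 u, hL.1, hL.2.1, hL.2.2.1⟩

lemma isTransTriple_iff :
    IsTransTriple r s ↔ ∃ u ∈ labelledCopies r (triangle false), image u univ = s := by
  constructor
  · rintro ⟨x, y, z, hxy, hyz, hxz, rfl, h1, h2, h3⟩
    refine ⟨![x, z, y], mem_labelledCopies.2 ⟨injective_vec3_iff.2 ⟨hxz, hxy, hyz.symm⟩, ?_⟩, ?_⟩
    · simp [triangle, h1, h2, h3]
    · rw [image_univ_fin3]
      exact congrArg (insert x) (pair_comm z y)
  · rintro ⟨u, hu, rfl⟩
    obtain ⟨hinj, hL⟩ := mem_labelledCopies.1 hu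
    simp only [triangle, Bool.false_eq_true, if_false, List.forall_mem_cons] at hL
    exact ⟨u 0, u 2, u 1, hinj.ne (by decide), hinj.ne (by decide), hinj.ne (by decide),
      by rw [image_univ_fin3, pair_comm (u 1)], hL.2.1, hL.2.2.1, hL.1⟩

lemma hasCycle4_iff :
    HasCycle4 r s ↔ ∃ u ∈ labelledCopies r cycle4, image u univ = s := by
  constructor
  · rintro ⟨a, b, c, d, hab, hac, had, hbc, hbd, hcd, rfl, h1, h2, h3, h4⟩
    refine ⟨![a, b, c, d], mem_labelledCopies.2
      ⟨injective_vec4_iff.2 ⟨hab, hac, had, hbc, hbd, hcd⟩, ?_⟩, ?_⟩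
    · simp [cycle4, h1, h2, h3, h4]
    · simp [image_univ_fin4]
  · rintro ⟨u, hu, rfl⟩
    obtain ⟨hinj, hL⟩ := mem_labelledCopies.1 hu
    simp only [cycle4, List.forall_mem_cons] at hL
    exact ⟨u 0, u 1, u 2, u 3, hinj.ne (by decide), hinj.ne (by decide), hinj.ne (by decide),
      hinj.ne (by decide), hinj.ne (by decide), hinj.ne (by decide),
      image_univ_fin4 u, hL.1, hL.2.1, hL.2.2.1, hL.2.2.2.1⟩

lemma isTrans4_iff :
    IsTrans4 r s ↔ ∃ u ∈ labelledCopies r trans4, image u univ = s := by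
  constructor
  · rintro ⟨a, b, c, d, hab, hac, had, hbc, hbd, hcd, rfl, h1, h2, h3, h4, h5, h6⟩
    refine ⟨![a, b, c, d], mem_labelledCopies.2
      ⟨injective_vec4_iff.2 ⟨hab, hac, had, hbc, hbd, hcd⟩, ?_⟩, ?_⟩
    · simp [trans4, h1, h2, h3, h4, h5, h6]
    · simp [image_univ_fin4]
  · rintro ⟨u, hu, rfl⟩
    obtain ⟨hinj, hL⟩ := mem_labelledCopies.1 hu
    simp only [trans4, List.forall_mem_cons] at hL
    exact ⟨u 0, u 1, u 2, u 3, hinj.ne (by decide), hinj.ne (by decide), hinj.ne (by decide),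
      hinj.ne (by decide), hinj.ne (by decide), hinj.ne (by decide),
      image_univ_fin4 u, hL.1, hL.2.1, hL.2.2.1, hL.2.2.2.1, hL.2.2.2.2.1, hL.2.2.2.2.2.1⟩

end Predicates

section LabelledCounts

variable {n : ℕ} {r : Fin n → Fin n → Prop} [DecidableRel r]

lemma isCyclicTriple_image_iff {f : Fin 3 → Fin n} (hf : Injective f) :
    IsCyclicTriple r (image f univ) ↔
      (labelledCopies (fun i j => r (f i) (f j)) (triangle true)).Nonempty := by
  rw [isCyclicTriple_iff, exists_mem_labelledCopies_image_eq_iff hf]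

lemma isTransTriple_image_iff {f : Fin 3 → Fin n} (hf : Injective f) :
    IsTransTriple r (image f univ) ↔
      (labelledCopies (fun i j => r (f i) (f j)) (triangle false)).Nonempty := by
  rw [isTransTriple_iff, exists_mem_labelledCopies_image_eq_iff hf]

lemma hasCycle4_image_iff {f : Fin 4 → Fin n} (hf : Injective f) :
    HasCycle4 r (image f univ) ↔ (labelledCopies (fun i j => r (f i) (f j)) cycle4).Nonempty := by
  rw [hasCycle4_iff, exists_mem_labelledCopies_image_eq_iff hf]

lemma isTrans4_image_iff {f : Fin 4 → Fin n} (hf : Injective f) :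
    IsTrans4 r (image f univ) ↔ (labelledCopies (fun i j => r (f i) (f j)) trans4).Nonempty := by
  rw [isTrans4_iff, exists_mem_labelledCopies_image_eq_iff hf]

variable (hr : IsTournament r)
include hr

open Classical in
lemma card_labelledCopies_triangle_true :
    #(labelledCopies r (triangle true)) = 3 * cyc3Count r :=
  card_labelledCopies_eq_mul_card 3 fun f hf => by
    simpa only [isCyclicTriple_image_iff hf] using (tournament_census_fin3 (hr.comp hf)).1

open Classical in
lemma card_labelledCopies_triangle_false :
    #(labelledCopies r (triangle false)) = trans3Count r :=
  (card_labelledCopies_eq_mul_card 1 fun f hf => by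
    simpa only [isTransTriple_image_iff hf] using
      (tournament_census_fin3 (hr.comp hf)).2.1).trans (one_mul _)

open Classical in
lemma card_labelledCopies_twoTriangles_true_true :
    #(labelledCopies r (twoTriangles true true)) = 2 * cyc4Count r :=
  card_labelledCopies_eq_mul_card 2 fun f hf => by
    simpa only [hasCycle4_image_iff hf] using (tournament_census_fin4 (hr.comp hf)).1

open Classical in
lemma card_labelledCopies_twoTriangles_true_false :
    #(labelledCopies r (twoTriangles true false)) = 2 * cyc4Count r :=
  card_labelledCopies_eq_mul_card 2 fun f hf => by
    simpa only [hasCycle4_image_iff hf] using (tournament_census_fin4 (hr.comp hf)).2.1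

open Classical in
lemma card_labelledCopies_twoTriangles_false_false :
    #(labelledCopies r (twoTriangles false false)) = 2 * trans4Count r :=
  card_labelledCopies_eq_mul_card 2 fun f hf => by
    simpa only [isTrans4_image_iff hf] using (tournament_census_fin4 (hr.comp hf)).2.2.1

end LabelledCounts

section SetCounts

variable {n : ℕ} {r : Fin n → Fin n → Prop} (hr : IsTournament r)
include hr

lemma cyc3Count_add_trans3Count : cyc3Count r + trans3Count r = n.choose 3 := by
  classical
  have htrans : trans3Count r = #{s ∈ powersetCard 3 univ | ¬ IsCyclicTriple r s} := by
    refine congrArg card (filter_congr fun s hs => ?_)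
    obtain ⟨f, hf, rfl⟩ := exists_injective_image_eq s (mem_powersetCard.1 hs).2
    rw [isCyclicTriple_image_iff hf, isTransTriple_image_iff hf,
      (tournament_census_fin3 (hr.comp hf)).2.2, not_not]
  rw [htrans, cyc3Count, card_filter_add_card_filter_not, card_powersetCard, card_univ,
    Fintype.card_fin]

lemma cyc3Count_mul_add_trans4Count :
    cyc3Count r * (n - 3) + trans4Count r = n.choose 4 + cyc4Count r := by
  classical
  have hfiber : ∀ s ∈ powersetCard 4 univ,
      #{u ∈ labelledCopies r ((triangle true).map (Prod.map Fin.castSucc Fin.castSucc)) |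
          image u univ = s} + (if IsTrans4 r s then 3 else 0) =
        3 + if HasCycle4 r s then 3 else 0 := by
    intro s hs
    obtain ⟨f, hf, rfl⟩ := exists_injective_image_eq s (mem_powersetCard.1 hs).2
    rw [card_filter_image_eq_card_labelledCopies_comp hf]
    simpa only [isTrans4_image_iff hf, hasCycle4_image_iff hf] using
      (tournament_census_fin4 (hr.comp hf)).2.2.2
  have hsum := sum_congr rfl hfiber
  rw [sum_add_distrib, sum_add_distrib, ← card_labelledCopies_eq_sum_card_filter,
    card_labelledCopies_map_castSucc, card_labelledCopies_triangle_true hr, ← sum_filter,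
    ← sum_filter, sum_const, sum_const, sum_const, card_powersetCard, card_univ, Fintype.card_fin,
    smul_eq_mul, smul_eq_mul, smul_eq_mul] at hsum
  unfold trans4Count cyc4Count
  linarith

lemma cast_trans3Count : (trans3Count r : ℝ) = n.choose 3 - cyc3Count r := by
  have := congrArg (Nat.cast : ℕ → ℝ) (cyc3Count_add_trans3Count hr)
  push_cast at this
  linarith

lemma cast_trans4Count (hn : 3 ≤ n) :
    (trans4Count r : ℝ) = n.choose 4 + cyc4Count r - cyc3Count r * (n - 3) := by
  have := congrArg (Nat.cast : ℕ → ℝ) (cyc3Count_mul_add_trans4Count hr)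
  push_cast [Nat.cast_sub hn] at this
  linarith

end SetCounts

section Arcs

variable {n : ℕ} (r : Fin n → Fin n → Prop) [DecidableRel r]

def arcs : Finset (Fin n × Fin n) := {e | r e.1 e.2}

/-- The apexes of the copies of `triangle t` on the arc `e`. -/
def apexes (t : Bool) (e : Fin n × Fin n) : Finset (Fin n) :=
  {b | if t then r e.2 b ∧ r b e.1 else r e.1 b ∧ r b e.2}

variable {r} {e : Fin n × Fin n} {t t' : Bool}

lemma mem_arcs : e ∈ arcs r ↔ r e.1 e.2 := by simp [arcs]

lemma mem_apexes {b : Fin n} :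
    b ∈ apexes r t e ↔ if t then r e.2 b ∧ r b e.1 else r e.1 b ∧ r b e.2 := by
  simp [apexes]

variable (hr : IsTournament r)
include hr

lemma card_arcs_le : #(arcs r) ≤ n.choose 2 := by
  have hne : ∀ e ∈ arcs r, e.1 ≠ e.2 := fun e he h => hr.1 e.2 (h ▸ mem_arcs.1 he)
  calc #(arcs r) ≤ #(powersetCard 2 (univ : Finset (Fin n))) := by
        refine card_le_card_of_injOn (fun e => {e.1, e.2}) (fun e he => ?_) fun e he e' he' h => ?_
        · simp [card_pair (hne e he)]
        · have := Set.pair_eq_pair_iff.1 (by simpa using congrArg ((↑) : _ → Set (Fin n)) h)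
          rcases this with ⟨h1, h2⟩ | ⟨h1, h2⟩
          · exact Prod.ext h1 h2
          · exact absurd (h1 ▸ h2 ▸ mem_arcs.1 he') (hr.asymm (mem_arcs.1 he))
    _ = n.choose 2 := by simp

lemma ne_of_mem_apexes {b : Fin n} (hb : b ∈ apexes r t e) : e.1 ≠ b ∧ e.2 ≠ b := by
  rw [mem_apexes] at hb
  constructor <;> rintro rfl <;> cases t <;>
    simp only [Bool.false_eq_true, if_false, if_true] at hb <;> exact hr.1 _ (by tauto)

lemma card_filter_triangle_eq_card_apexes (he : e ∈ arcs r) :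
    #{u ∈ labelledCopies r (triangle t) | (u 0, u 1) = e} = #(apexes r t e) := by
  have hne : e.1 ≠ e.2 := fun h => hr.1 e.2 (h ▸ mem_arcs.1 he)
  refine card_bij' (fun u _ => u 2) (fun b _ => ![e.1, e.2, b]) (fun u hu => ?_)
    (fun b hb => ?_) (fun u hu => ?_) (fun b _ => rfl)
  · obtain ⟨hmem, rfl⟩ := mem_filter.1 hu
    have hL := (mem_labelledCopies.1 hmem).2
    rw [mem_apexes]
    cases t <;> simp_all [triangle]
  · obtain ⟨h1, h2⟩ := ne_of_mem_apexes hr hb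
    rw [mem_apexes] at hb
    refine mem_filter.2 ⟨mem_labelledCopies.2 ⟨injective_vec3_iff.2 ⟨hne, h1, h2⟩, ?_⟩, rfl⟩
    have := mem_arcs.1 he
    cases t <;> simp_all [triangle]
  · obtain ⟨-, rfl⟩ := mem_filter.1 hu
    funext i
    fin_cases i <;> rfl

lemma card_filter_twoTriangles_eq (he : e ∈ arcs r) :
    #{u ∈ labelledCopies r (twoTriangles t t') | (u 0, u 1) = e} =
      #{bc ∈ apexes r t e ×ˢ apexes r t' e | bc.1 ≠ bc.2} := by
  have hne : e.1 ≠ e.2 := fun h => hr.1 e.2 (h ▸ mem_arcs.1 he)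
  refine card_bij' (fun u _ => (u 2, u 3)) (fun bc _ => ![e.1, e.2, bc.1, bc.2])
    (fun u hu => ?_) (fun bc hbc => ?_) (fun u hu => ?_) (fun bc _ => rfl)
  · obtain ⟨hmem, rfl⟩ := mem_filter.1 hu
    obtain ⟨hinj, hL⟩ := mem_labelledCopies.1 hmem
    simp only [mem_filter, mem_product, mem_apexes]
    refine ⟨?_, hinj.ne (by decide)⟩
    cases t <;> cases t' <;> simp_all [twoTriangles]
  · obtain ⟨hbc', hbc⟩ := mem_filter.1 hbc
    obtain ⟨hb, hc⟩ := mem_product.1 hbc'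
    obtain ⟨hb1, hb2⟩ := ne_of_mem_apexes hr hb
    obtain ⟨hc1, hc2⟩ := ne_of_mem_apexes hr hc
    rw [mem_apexes] at hb hc
    refine mem_filter.2 ⟨mem_labelledCopies.2
      ⟨injective_vec4_iff.2 ⟨hne, hb1, hc1, hb2, hc2, hbc⟩, ?_⟩, rfl⟩
    have := mem_arcs.1 he
    cases t <;> cases t' <;> simp_all [twoTriangles]
  · obtain ⟨-, rfl⟩ := mem_filter.1 hu
    funext i
    fin_cases i <;> rfl

lemma sum_card_apexes : ∑ e ∈ arcs r, #(apexes r t e) = #(labelledCopies r (triangle t)) := by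
  rw [card_eq_sum_card_fiberwise (f := fun u => (u 0, u 1)) (t := arcs r) fun u hu =>
    mem_arcs.2 ((mem_labelledCopies.1 hu).2 (0, 1) (by simp [triangle]))]
  exact sum_congr rfl fun e he => (card_filter_triangle_eq_card_apexes hr he).symm

lemma disjoint_apexes (h : t ≠ t') :
    Disjoint (apexes r t e) (apexes r t' e) := by
  refine disjoint_left.2 fun b hb hb' => ?_
  rw [mem_apexes] at hb hb'
  cases t <;> cases t' <;> simp only [Bool.false_eq_true, if_false, if_true] at hb hb' <;>
    first | exact h rfl | exact hr.asymm hb.1 hb'.2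

lemma sum_card_apexes_mul_card_apexes :
    ∑ e ∈ arcs r, #(apexes r t e) * #(apexes r t' e) =
      #(labelledCopies r (twoTriangles t t')) +
        if t = t' then #(labelledCopies r (triangle t)) else 0 := by
  rw [card_eq_sum_card_fiberwise (f := fun u => (u 0, u 1)) (t := arcs r) fun u hu =>
    mem_arcs.2 ((mem_labelledCopies.1 hu).2 (0, 1) (by simp [twoTriangles]))]
  split_ifs with h
  · subst h
    rw [← sum_card_apexes hr, ← sum_add_distrib]
    refine sum_congr rfl fun e he => ?_
    rw [card_filter_twoTriangles_eq hr he, card_mul_card_eq_card_filter_ne_add_card_inter,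
      inter_self]
  · rw [add_zero]
    refine sum_congr rfl fun e he => ?_
    rw [card_filter_twoTriangles_eq hr he, card_mul_card_eq_card_filter_ne_add_card_inter,
      disjoint_iff_inter_eq_empty.1 (disjoint_apexes hr h), card_empty, add_zero]

lemma sum_card_apexes_true : ∑ e ∈ arcs r, #(apexes r true e) = 3 * cyc3Count r :=
  (sum_card_apexes hr).trans (card_labelledCopies_triangle_true hr)

lemma sum_card_apexes_false : ∑ e ∈ arcs r, #(apexes r false e) = trans3Count r :=
  (sum_card_apexes hr).trans (card_labelledCopies_triangle_false hr)

lemma sum_card_apexes_true_sq :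
    ∑ e ∈ arcs r, #(apexes r true e) * #(apexes r true e) = 2 * cyc4Count r + 3 * cyc3Count r := by
  rw [sum_card_apexes_mul_card_apexes hr, if_pos rfl,
    card_labelledCopies_twoTriangles_true_true hr, card_labelledCopies_triangle_true hr]

lemma sum_card_apexes_true_mul_false :
    ∑ e ∈ arcs r, #(apexes r true e) * #(apexes r false e) = 2 * cyc4Count r := by
  rw [sum_card_apexes_mul_card_apexes hr, if_neg (by decide),
    card_labelledCopies_twoTriangles_true_false hr, add_zero]

lemma sum_card_apexes_false_sq :
    ∑ e ∈ arcs r, #(apexes r false e) * #(apexes r false e) =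
      2 * trans4Count r + trans3Count r := by
  rw [sum_card_apexes_mul_card_apexes hr, if_pos rfl,
    card_labelledCopies_twoTriangles_false_false hr, card_labelledCopies_triangle_false hr]

end Arcs

variable {n : ℕ} {r : Fin n → Fin n → Prop}

lemma sq_le_choose_two_mul (hr : IsTournament r) (a b : ℝ) :
    (3 * a * cyc3Count r + b * trans3Count r) ^ 2 ≤
      n.choose 2 * (a ^ 2 * (2 * cyc4Count r + 3 * cyc3Count r) + 4 * a * b * cyc4Count r +
        b ^ 2 * (2 * trans4Count r + trans3Count r)) := by
  classical
  set g : Fin n × Fin n → ℝ := fun e => #(apexes r true e)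
  set h : Fin n × Fin n → ℝ := fun e => #(apexes r false e)
  have hg : ∑ e ∈ arcs r, g e = 3 * cyc3Count r := by
    simp only [g]; exact_mod_cast sum_card_apexes_true hr
  have hh : ∑ e ∈ arcs r, h e = trans3Count r := by
    simp only [h]; exact_mod_cast sum_card_apexes_false hr
  have hgg : ∑ e ∈ arcs r, g e * g e = 2 * cyc4Count r + 3 * cyc3Count r := by
    simp only [g]; exact_mod_cast sum_card_apexes_true_sq hr
  have hgh : ∑ e ∈ arcs r, g e * h e = 2 * cyc4Count r := by
    simp only [g, h]; exact_mod_cast sum_card_apexes_true_mul_false hr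
  have hhh : ∑ e ∈ arcs r, h e * h e = 2 * trans4Count r + trans3Count r := by
    simp only [h]; exact_mod_cast sum_card_apexes_false_sq hr
  calc (3 * a * cyc3Count r + b * trans3Count r) ^ 2
      = (∑ e ∈ arcs r, (a * g e + b * h e)) ^ 2 := by
        rw [sum_add_distrib, ← mul_sum, ← mul_sum, hg, hh]; ring
    _ ≤ #(arcs r) * ∑ e ∈ arcs r, (a * g e + b * h e) ^ 2 := sq_sum_le_card_mul_sum_sq
    _ ≤ n.choose 2 * ∑ e ∈ arcs r, (a * g e + b * h e) ^ 2 :=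
        mul_le_mul_of_nonneg_right (by exact_mod_cast card_arcs_le hr)
          (sum_nonneg fun _ _ => sq_nonneg _)
    _ = _ := by
        have hsq : ∀ e, (a * g e + b * h e) ^ 2 =
            a ^ 2 * (g e * g e) + 2 * a * b * (g e * h e) + b ^ 2 * (h e * h e) := fun e => by ring
        simp_rw [hsq, sum_add_distrib, ← mul_sum, hgg, hgh, hhh]
        ring

lemma cast_choose_succ_mul {n k : ℕ} (h : k ≤ n) :
    (n.choose (k + 1) : ℝ) * (k + 1) = n.choose k * (n - k) := by
  have := congrArg (Nat.cast : ℕ → ℝ) (Nat.choose_succ_right_eq n k)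
  push_cast [Nat.cast_sub h] at this
  exact this

lemma mul_sq_div_sub_div_le {m p q : ℝ} (hm : 3 < m) (hp : 0 ≤ p)
    (h : 27 * p ^ 2 * (m - 2) ≤ (1 + 8 * p) ^ 2 * q * (m - 3) / 2 +
      18 * p ^ 2 * (1 - 4 * p) * (m - 3) + 3 * p * (1 + 2 * p) ^ 2 + 36 * p ^ 2 * (1 - p)) :
    18 * p ^ 2 / (1 + 8 * p) - 6 / (m - 3) ≤ q := by
  have h8 : 0 < 1 + 8 * p := by linarith
  have hm3 : 0 < m - 3 := by linarith
  have key : (1 + 8 * p) * (18 * p ^ 2 * (m - 3) - 6 * (1 + 8 * p)) ≤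
      (1 + 8 * p) * (q * ((1 + 8 * p) * (m - 3))) := by
    nlinarith [pow_nonneg hp 2, pow_nonneg hp 3]
  rw [div_sub_div _ _ h8.ne' hm3.ne', div_le_iff₀ (by positivity)]
  linarith [le_of_mul_le_mul_left key h8]

theorem le_cyc4Count_div_choose (hr : IsTournament r) (hn : 4 ≤ n) :
    18 * ((cyc3Count r : ℝ) / n.choose 3) ^ 2 / (1 + 8 * ((cyc3Count r : ℝ) / n.choose 3)) -
      6 / (n - 3) ≤ (cyc4Count r : ℝ) / n.choose 4 := by
  have hC2 : (0 : ℝ) < n.choose 2 := by exact_mod_cast Nat.choose_pos (by omega)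
  have hC3 : (0 : ℝ) < n.choose 3 := by exact_mod_cast Nat.choose_pos (by omega)
  have hC4 : (0 : ℝ) < n.choose 4 := by exact_mod_cast Nat.choose_pos (by omega)
  have h23 : (n.choose 3 : ℝ) * 3 = n.choose 2 * (n - 2) := by
    have := cast_choose_succ_mul (n := n) (k := 2) (by omega)
    norm_num at this
    exact this
  have h34 : (n.choose 4 : ℝ) * 4 = n.choose 3 * (n - 3) := by
    have := cast_choose_succ_mul (n := n) (k := 3) (by omega)
    norm_num at this
    exact this
  set p := (cyc3Count r : ℝ) / n.choose 3
  set q := (cyc4Count r : ℝ) / n.choose 4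
  have hP : (cyc3Count r : ℝ) = p * n.choose 3 := (div_mul_cancel₀ _ hC3.ne').symm
  have hQ : (cyc4Count r : ℝ) = q * n.choose 4 := (div_mul_cancel₀ _ hC4.ne').symm
  -- Divided by `C(n,2) C(n,3)`, this is the hypothesis of `mul_sq_div_sub_div_le`.
  have hcs := sq_le_choose_two_mul hr (1 + 2 * p) (6 * p)
  rw [cast_trans3Count hr, cast_trans4Count hr (by omega), hP, hQ] at hcs
  refine mul_sq_div_sub_div_le (by exact_mod_cast hn) (by positivity) (sub_nonneg.1 ?_)
  refine (mul_nonneg_iff_of_pos_left (mul_pos hC2 hC3)).1 ?_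
  linear_combination hcs + (n.choose 2 * ((1 + 8 * p) ^ 2 * q + 36 * p ^ 2) / 2 : ℝ) * h34 -
    27 * p ^ 2 * n.choose 3 * h23

end Tournament

/-- for every `ε > 0` there is `N` such that every tournament on
`n ≥ N` vertices satisfies `c4 ≥ 18·c3²/(1 + 8·c3) − ε`. -/
theorem stmt_9 :
    ∀ ε : ℝ, 0 < ε → ∃ N : ℕ, ∀ n : ℕ, N ≤ n → ∀ r : Fin n → Fin n → Prop,
      IsTournament r →
        (cyc4Count r : ℝ) / (n.choose 4 : ℝ) ≥
          18 * ((cyc3Count r : ℝ) / (n.choose 3 : ℝ)) ^ 2 /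
            (1 + 8 * ((cyc3Count r : ℝ) / (n.choose 3 : ℝ))) - ε := by
  intro ε hε
  refine ⟨⌈6 / ε⌉₊ + 4, fun n hn r hr => ?_⟩
  have hn' : 6 / ε ≤ (n : ℝ) - 3 := by
    have : ((⌈6 / ε⌉₊ + 4 : ℕ) : ℝ) ≤ n := by exact_mod_cast hn
    push_cast at this
    linarith [Nat.le_ceil (6 / ε)]
  have herr : 6 / ((n : ℝ) - 3) ≤ ε := by
    rw [div_le_iff₀ (by linarith [div_pos (by norm_num : (0 : ℝ) < 6) hε])]
    exact (div_le_iff₀' hε).1 hn'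
  linarith [Tournament.le_cyc4Count_div_choose hr (by omega : 4 ≤ n)]
end

section
/- Let n ≥ 1 and let s be an integer with n/2 ≤ s ≤ n. Define a tournament T on vertex set {1,2,…,n} by: for 1 ≤ x < y ≤ n, x→y if and only if y ≤ x+s, and y→x otherwise. Then for every 3-element subset {x,y,z} spanning a cyclic triangle (x→y→z→x) and every vertex w ∉ {x,y,z}, it is not the case that w→x, w→y and w→z, and it is not the case that x→w, y→w and z→w. Equivalently, every 4-element vertex subset of T either spans a transitive subtournament or contains a directed 4-cycle. -/
open Finset

/-!
In any tournament a 4-set containing no cyclic triangle is transitive, and a 4-set consisting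
of a cyclic triangle and a vertex that neither beats all of it nor loses to all of it lies on a
directed 4-cycle. So the second claim follows from the first, which is arithmetic about the
positions of a cyclic triangle and a fourth vertex in `{0, …, n - 1}`.
-/

section FourVertexSets

variable {n : ℕ} {r : Fin n → Fin n → Prop}

def NoCommonNeighbourOfCyclicTriangle (r : Fin n → Fin n → Prop) : Prop :=
  ∀ x y z w : Fin n, x ≠ y → y ≠ z → x ≠ z → r x y → r y z → r z x →
    w ≠ x → w ≠ y → w ≠ z → ¬(r w x ∧ r w y ∧ r w z) ∧ ¬(r x w ∧ r y w ∧ r z w)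

variable (htot : ∀ u v : Fin n, u ≠ v → r u v ∨ r v u)
include htot

theorem isCyclicTriple_or_isTransTriple {T : Finset (Fin n)} (hT : T.card = 3) :
    IsCyclicTriple r T ∨ IsTransTriple r T := by
  obtain ⟨a, b, c, hab, hac, hbc, rfl⟩ := card_eq_three.mp hT
  rcases htot a b hab with hab' | hba <;> rcases htot b c hbc with hbc' | hcb <;>
    rcases htot a c hac with hac' | hca
  · exact Or.inr ⟨a, b, c, hab, hbc, hac, rfl, hab', hbc', hac'⟩
  · exact Or.inl ⟨a, b, c, hab, hbc, hac, rfl, hab', hbc', hca⟩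
  · exact Or.inr ⟨a, c, b, hac, hbc.symm, hab, by rw [pair_comm], hac', hcb, hab'⟩
  · exact Or.inr ⟨c, a, b, hac.symm, hab, hbc.symm, by rw [pair_comm, insert_comm], hca, hab', hcb⟩
  · exact Or.inr ⟨b, a, c, hab.symm, hac, hbc, by rw [insert_comm], hba, hac', hbc'⟩
  · exact Or.inr ⟨b, c, a, hbc, hac.symm, hab.symm, by rw [insert_comm, pair_comm], hbc', hca, hba⟩
  · exact Or.inl ⟨a, c, b, hac, hbc.symm, hab, by rw [pair_comm], hac', hcb, hba⟩
  · exact Or.inr ⟨c, b, a, hbc.symm, hab.symm, hac.symm, by rw [insert_comm, pair_comm, insert_comm],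
      hcb, hba, hca⟩

variable (hcyc : NoCommonNeighbourOfCyclicTriangle r)
include hcyc

theorem hasCycle4_of_cyclic {w x y z : Fin n} (hwx : w ≠ x) (hwy : w ≠ y) (hwz : w ≠ z)
    (hxy : x ≠ y) (hyz : y ≠ z) (hxz : x ≠ z) (h1 : r x y) (h2 : r y z) (h3 : r z x) :
    HasCycle4 r {w, x, y, z} := by
  obtain ⟨hin, hout⟩ := hcyc x y z w hxy hyz hxz h1 h2 h3 hwx hwy hwz
  -- `w` beats some vertex of the triangle and loses to another, so it loses to the
  -- predecessor of some vertex it beats; that predecessor closes the 4-cycle.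
  rcases htot w x hwx with hwx' | hxw
  · rcases htot w z hwz with hwz' | hzw
    · rcases htot w y hwy with hwy' | hyw
      · exact absurd ⟨hwx', hwy', hwz'⟩ hin
      · exact ⟨w, z, x, y, hwz, hwx, hwy, hxz.symm, hyz.symm, hxy,
          by rw [pair_comm, insert_comm x z], hwz', h3, h1, hyw⟩
    · exact ⟨w, x, y, z, hwx, hwy, hwz, hxy, hxz, hyz, rfl, hwx', h1, h2, hzw⟩
  · rcases htot w y hwy with hwy' | hyw
    · exact ⟨w, y, z, x, hwy, hwz, hwx, hyz, hxy.symm, hxz.symm,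
        by rw [insert_comm x y, pair_comm x z], hwy', h2, h3, hxw⟩
    · rcases htot w z hwz with hwz' | hzw
      · exact ⟨w, z, x, y, hwz, hwx, hwy, hxz.symm, hyz.symm, hxy,
          by rw [pair_comm, insert_comm x z], hwz', h3, h1, hyw⟩
      · exact absurd ⟨hxw, hyw, hzw⟩ hout

theorem isTrans4_or_hasCycle4_of_trans {d x y z : Fin n} (hdx : d ≠ x) (hdy : d ≠ y) (hdz : d ≠ z)
    (hxy : x ≠ y) (hyz : y ≠ z) (hxz : x ≠ z) (h1 : r x y) (h2 : r y z) (h3 : r x z) :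
    IsTrans4 r {d, x, y, z} ∨ HasCycle4 r {d, x, y, z} := by
  have hperm₁ : ({x, y, z, d} : Finset (Fin n)) = {d, x, y, z} := by
    rw [pair_comm, insert_comm y d, insert_comm x d]
  have hperm₂ : ({z, x, y, d} : Finset (Fin n)) = {d, x, y, z} := by
    rw [← hperm₁, insert_comm z x, insert_comm z y, pair_comm]
  rcases htot d x hdx with hdx' | hxd
  · rcases htot d y hdy with hdy' | hyd
    · rcases htot d z hdz with hdz' | hzd
      · exact Or.inl ⟨d, x, y, z, hdx, hdy, hdz, hxy, hxz, hyz, rfl, hdx', hdy', hdz', h1, h3, h2⟩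
      · exact Or.inr (hperm₁ ▸ hasCycle4_of_cyclic htot hcyc hxy hxz hdx.symm hyz hdz.symm hdy.symm
          h2 hzd hdy')
    · exact Or.inr (hperm₂ ▸ hasCycle4_of_cyclic htot hcyc hxz.symm hyz.symm hdz.symm hxy hdy.symm
        hdx.symm h1 hyd hdx')
  · rcases htot d y hdy with hdy' | hyd
    · rcases htot d z hdz with hdz' | hzd
      · exact Or.inl ⟨x, d, y, z, hdx.symm, hxy, hxz, hdy, hdz, hyz, by rw [insert_comm],
          hxd, h1, h3, hdy', hdz', h2⟩
      · exact Or.inr (hperm₁ ▸ hasCycle4_of_cyclic htot hcyc hxy hxz hdx.symm hyz hdz.symm hdy.symm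
          h2 hzd hdy')
    · rcases htot d z hdz with hdz' | hzd
      · exact Or.inl ⟨x, y, d, z, hxy, hdx.symm, hxz, hdy.symm, hyz, hdz,
          by rw [insert_comm d x, insert_comm d y], h1, hxd, h3, hyd, h2, hdz'⟩
      · exact Or.inl ⟨x, y, z, d, hxy, hxz, hdx.symm, hyz, hdy.symm, hdz.symm, hperm₁.symm,
          h1, h3, hxd, h2, hyd, hzd⟩

theorem isTrans4_or_hasCycle4 {S : Finset (Fin n)} (hS : S.card = 4) :
    IsTrans4 r S ∨ HasCycle4 r S := by
  obtain ⟨d, T, hdT, rfl, hT⟩ := card_eq_succ.mp hS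
  rcases isCyclicTriple_or_isTransTriple htot hT with
    ⟨x, y, z, hxy, hyz, hxz, rfl, h1, h2, h3⟩ | ⟨x, y, z, hxy, hyz, hxz, rfl, h1, h2, h3⟩ <;>
  simp only [mem_insert, mem_singleton, not_or] at hdT <;> obtain ⟨hdx, hdy, hdz⟩ := hdT
  · exact Or.inr (hasCycle4_of_cyclic htot hcyc hdx hdy hdz hxy hyz hxz h1 h2 h3)
  · exact isTrans4_or_hasCycle4_of_trans htot hcyc hdx hdy hdz hxy hyz hxz h1 h2 h3

end FourVertexSets

section IntervalTournament

variable {n s : ℕ} {r : Fin n → Fin n → Prop}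

def IsIntervalTournament (s : ℕ) (r : Fin n → Fin n → Prop) : Prop :=
  ∀ u v : Fin n, u ≠ v →
    (r u v ↔ (u.val < v.val ∧ v.val ≤ u.val + s) ∨ (v.val < u.val ∧ v.val + s < u.val))

theorem isIntervalTournament_of_forall_lt
    (hr : ∀ x y : Fin n, x.val < y.val → (r x y ↔ y.val ≤ x.val + s))
    (hr' : ∀ x y : Fin n, x.val < y.val → (r y x ↔ ¬ y.val ≤ x.val + s)) :
    IsIntervalTournament s r := by
  intro u v huv
  rcases lt_or_gt_of_ne (Fin.val_ne_of_ne huv) with h | h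
  · rw [hr u v h]; omega
  · rw [hr' v u h]; omega

theorem IsIntervalTournament.total (hT : IsIntervalTournament s r) (u v : Fin n) (huv : u ≠ v) :
    r u v ∨ r v u := by
  rw [hT u v huv, hT v u huv.symm]
  omega

/-- A cyclic triangle on `a < b < c` is `a → b → c → a`, so `b - a ≤ s`, `c - b ≤ s < c - a`.
Wherever a common neighbour `w` lies relative to `a < b < c`, its three edges contradict one
of these bounds or force the span of `{w, a, c}` to exceed `2 s ≥ n`. -/
theorem IsIntervalTournament.noCommonNeighbourOfCyclicTriangle (hT : IsIntervalTournament s r)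
    (hs : n ≤ 2 * s) : NoCommonNeighbourOfCyclicTriangle r := by
  intro x y z w hxy hyz hxz h1 h2 h3 hwx hwy hwz
  rw [hT x y hxy] at h1
  rw [hT y z hyz] at h2
  rw [hT z x hxz.symm] at h3
  have hw := w.isLt
  refine ⟨fun ⟨hwx', hwy', hwz'⟩ => ?_, fun ⟨hxw, hyw, hzw⟩ => ?_⟩
  · rw [hT w x hwx] at hwx'
    rw [hT w y hwy] at hwy'
    rw [hT w z hwz] at hwz'
    omega
  · rw [hT x w hwx.symm] at hxw
    rw [hT y w hwy.symm] at hyw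
    rw [hT z w hwz.symm] at hzw
    omega

end IntervalTournament

theorem stmt_11_general {n s : ℕ} (hs1 : n ≤ 2 * s)
    (r : Fin n → Fin n → Prop)
    (hr : ∀ x y : Fin n, x.val < y.val → (r x y ↔ y.val ≤ x.val + s))
    (hr' : ∀ x y : Fin n, x.val < y.val → (r y x ↔ ¬ y.val ≤ x.val + s)) :
    (∀ x y z w : Fin n, x ≠ y → y ≠ z → x ≠ z → r x y → r y z → r z x →
      w ≠ x → w ≠ y → w ≠ z →
        ¬(r w x ∧ r w y ∧ r w z) ∧ ¬(r x w ∧ r y w ∧ r z w)) ∧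
    (∀ S : Finset (Fin n), S.card = 4 → IsTrans4 r S ∨ HasCycle4 r S) := by
  have hT := isIntervalTournament_of_forall_lt hr hr'
  have hmixed := hT.noCommonNeighbourOfCyclicTriangle hs1
  exact ⟨hmixed, fun _ hS => isTrans4_or_hasCycle4 hT.total hmixed hS⟩

/-- for `n/2 ≤ s ≤ n`, the tournament on `{1,…,n}` (here `Fin n`)
with `x→y` iff `y ≤ x+s` (for `x < y`), and `y→x` otherwise, has the property that
no cyclic triangle has a common in-neighbour or common out-neighbour; equivalently,
every 4-element vertex subset spans a transitive subtournament or contains a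
directed 4-cycle. -/
theorem stmt_11 {n s : ℕ} (hn : 1 ≤ n) (hs1 : n ≤ 2 * s) (hs2 : s ≤ n)
    (r : Fin n → Fin n → Prop)
    (hr : ∀ x y : Fin n, x.val < y.val → (r x y ↔ y.val ≤ x.val + s))
    (hr' : ∀ x y : Fin n, x.val < y.val → (r y x ↔ ¬ y.val ≤ x.val + s)) :
    (∀ x y z w : Fin n, x ≠ y → y ≠ z → x ≠ z → r x y → r y z → r z x →
      w ≠ x → w ≠ y → w ≠ z →
        ¬(r w x ∧ r w y ∧ r w z) ∧ ¬(r x w ∧ r y w ∧ r z w)) ∧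
    (∀ S : Finset (Fin n), S.card = 4 → IsTrans4 r S ∨ HasCycle4 r S) :=
  stmt_11_general hs1 r hr hr'
end

section
/- Let x, y be real numbers with y > 0 and x ≥ (1+√5)·y. Then there exist real numbers s ≥ t ≥ 0 such that s + t = x + 2y, s³ + t³ = x³ + 2y³, and s⁴ + t⁴ < x⁴ + 2y⁴. -/
/-!
Put `p = x + 2y` and `q = x³ + 2y³`. A pair `s ≥ t ≥ 0` with `s + t = p` and `s³ + t³ = q`
exists as soon as `p³ ≤ 4q ≤ 4p³`: it is `(p ± r)/2` with `3pr² = 4q - p³`. Here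
`4q - p³ = 3x(x² - 2xy - 4y²)`, which is nonnegative exactly when `x ≥ (1 + √5)y`.
The sum of fourth powers of such a pair is determined by `p` and `q`, and comparing it with
`x⁴ + 2y⁴` leaves, after multiplying by `p²`, the positive polynomial `2xy³(4x² + 9xy + 4y²)`.
-/

lemma exists_add_eq_and_pow_three_add_eq {p q : ℝ} (hp : 0 < p) (hlo : p ^ 3 ≤ 4 * q)
    (hhi : q ≤ p ^ 3) :
    ∃ s t : ℝ, t ≤ s ∧ 0 ≤ t ∧ s + t = p ∧ s ^ 3 + t ^ 3 = q := by
  set r := √((4 * q - p ^ 3) / (3 * p))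
  have hr : 0 ≤ r := Real.sqrt_nonneg _
  have hr_sq : r ^ 2 * (3 * p) = 4 * q - p ^ 3 := by
    rw [Real.sq_sqrt (div_nonneg (by linarith) (by positivity)),
      div_mul_cancel₀ _ (by positivity)]
  have hr_le : r ≤ p := by
    refine (sq_le_sq₀ hr hp.le).1 (le_of_mul_le_mul_right ?_ (by positivity : 0 < 3 * p))
    nlinarith
  refine ⟨(p + r) / 2, (p - r) / 2, by linarith, by linarith, by ring, ?_⟩
  linear_combination hr_sq / 4

lemma pow_four_add_pow_four_mul_sq_add (s t : ℝ) :
    (s ^ 4 + t ^ 4) * (9 * (s + t) ^ 2) =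
      2 * (s ^ 3 + t ^ 3) ^ 2 + 8 * (s + t) ^ 3 * (s ^ 3 + t ^ 3) - (s + t) ^ 6 := by
  ring

lemma sq_sub_two_mul_mul_sub_four_mul_sq_nonneg {x y : ℝ} (hy : 0 ≤ y)
    (hx : (1 + √5) * y ≤ x) : 0 ≤ x ^ 2 - 2 * x * y - 4 * y ^ 2 := by
  have h5 : √5 ^ 2 = 5 := Real.sq_sqrt (by norm_num)
  have hfactor : x ^ 2 - 2 * x * y - 4 * y ^ 2 = (x - (1 + √5) * y) * (x + (√5 - 1) * y) := by
    linear_combination y ^ 2 * h5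
  have h5_ge : 1 ≤ √5 := Real.one_le_sqrt.2 (by norm_num)
  rw [hfactor]
  exact mul_nonneg (by linarith) (by nlinarith)

/-- for `y > 0` and `x ≥ (1+√5)·y` there are `s ≥ t ≥ 0` with
`s + t = x + 2y`, `s³ + t³ = x³ + 2y³` and `s⁴ + t⁴ < x⁴ + 2y⁴`. -/
theorem stmt_12 (x y : ℝ) (hy : 0 < y) (hx : (1 + Real.sqrt 5) * y ≤ x) :
    ∃ s t : ℝ, t ≤ s ∧ 0 ≤ t ∧ s + t = x + 2 * y ∧
      s ^ 3 + t ^ 3 = x ^ 3 + 2 * y ^ 3 ∧ s ^ 4 + t ^ 4 < x ^ 4 + 2 * y ^ 4 := by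
  have hx0 : 0 < x := lt_of_lt_of_le (by positivity) hx
  have hquad := sq_sub_two_mul_mul_sub_four_mul_sq_nonneg hy.le hx
  obtain ⟨s, t, hts, ht, hsum, hcube⟩ :=
    exists_add_eq_and_pow_three_add_eq (p := x + 2 * y) (q := x ^ 3 + 2 * y ^ 3) (by positivity)
      (by nlinarith [mul_nonneg hx0.le hquad]) (by nlinarith [mul_pos hx0 hy])
  refine ⟨s, t, hts, ht, hsum, hcube, ?_⟩
  have hgap : (x ^ 4 + 2 * y ^ 4) * (9 * (s + t) ^ 2) - (s ^ 4 + t ^ 4) * (9 * (s + t) ^ 2) =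
      18 * x * y ^ 3 * (4 * x ^ 2 + 9 * x * y + 4 * y ^ 2) := by
    rw [pow_four_add_pow_four_mul_sq_add, hsum, hcube]; ring
  have hgap_pos : 0 < 18 * x * y ^ 3 * (4 * x ^ 2 + 9 * x * y + 4 * y ^ 2) := by positivity
  exact lt_of_mul_lt_mul_right (by linarith) (by positivity : (0 : ℝ) ≤ 9 * (s + t) ^ 2)
end

section
/- Let x, y be real numbers with x > y > 0 and y ≥ ((√5−1)/4)·x. Then there exist real numbers s ≥ t ≥ 0 such that 2s + t = x + 2y, 2s³ + t³ = x³ + 2y³, and 2s⁴ + t⁴ < x⁴ + 2y⁴. Moreover one may take s = (2x + 3y − √(y(4x+5y)))/2 and t = x + 2y − 2s. -/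
/-!
For triples with fixed `e₁ = a + b + c` and fixed `p₃ = a³ + b³ + c³`, Newton's identities give
`p₄ = (4 e₁ p₃ - e₁⁴) / 3 + 2 e₂²` with `e₂ = ab + bc + ca`, so on nonnegative triples the sum of
fourth powers decreases exactly when `e₂` does. With `r = √(y(4x+5y))`, the prescribed `s, t`
satisfy `t = r - x - y`, which is nonnegative precisely when `y ≥ ((√5-1)/4) x`, and
`4 e₂(s,s,t) = 2r(4x+5y) - 4x² - 20xy - 18y²`; comparing with `e₂(x,y,y) = 2xy + y²` reduces
to `(2x² + 14xy + 11y²)² - y(4x+5y)³ = 4(x-y)³(x+y) > 0`.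
-/

theorem sum_pow_four_eq (a b c : ℝ) :
    a ^ 4 + b ^ 4 + c ^ 4 = (4 * (a + b + c) * (a ^ 3 + b ^ 3 + c ^ 3) - (a + b + c) ^ 4) / 3
      + 2 * (a * b + b * c + c * a) ^ 2 := by
  ring

theorem sum_pow_four_lt_of_sum_eq_of_sum_pow_three_eq {a b c a' b' c' : ℝ}
    (h₁ : a' + b' + c' = a + b + c) (h₃ : a' ^ 3 + b' ^ 3 + c' ^ 3 = a ^ 3 + b ^ 3 + c ^ 3)
    (he₂_nonneg : 0 ≤ a' * b' + b' * c' + c' * a')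
    (he₂_lt : a' * b' + b' * c' + c' * a' < a * b + b * c + c * a) :
    a' ^ 4 + b' ^ 4 + c' ^ 4 < a ^ 4 + b ^ 4 + c ^ 4 := by
  rw [sum_pow_four_eq a, sum_pow_four_eq a', h₁, h₃]
  have := pow_lt_pow_left₀ he₂_lt he₂_nonneg two_ne_zero
  linarith

section

variable {x y : ℝ}

theorem add_le_sqrt_of_golden_le (hx : 0 ≤ x) (hlb : (√5 - 1) / 4 * x ≤ y) :
    x + y ≤ √(y * (4 * x + 5 * y)) := by
  have h5 : √5 ^ 2 = 5 := Real.sq_sqrt (by norm_num)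
  have hy : 0 ≤ y := le_trans (mul_nonneg (by nlinarith [Real.sqrt_nonneg 5]) hx) hlb
  have hfactor : 4 * (y * (4 * x + 5 * y) - (x + y) ^ 2)
      = (4 * y - (√5 - 1) * x) * (4 * y + (√5 + 1) * x) := by
    linear_combination x ^ 2 * h5
  have : 0 ≤ (4 * y - (√5 - 1) * x) * (4 * y + (√5 + 1) * x) :=
    mul_nonneg (by linarith) (by positivity)
  exact Real.le_sqrt_of_sq_le (by linarith)

theorem three_mul_sqrt_le (hy : 0 ≤ y) (hxy : y ≤ x) :
    3 * √(y * (4 * x + 5 * y)) ≤ 4 * x + 5 * y := by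
  refine (pow_le_pow_iff_left₀ (by positivity) (by linarith) two_ne_zero).mp ?_
  rw [mul_pow, Real.sq_sqrt (by nlinarith)]
  nlinarith

theorem sqrt_mul_add_lt (hy : 0 < y) (hxy : y < x) :
    √(y * (4 * x + 5 * y)) * (4 * x + 5 * y) < 2 * x ^ 2 + 14 * x * y + 11 * y ^ 2 := by
  have hkey : (2 * x ^ 2 + 14 * x * y + 11 * y ^ 2) ^ 2 - y * (4 * x + 5 * y) * (4 * x + 5 * y) ^ 2
      = 4 * (x - y) ^ 3 * (x + y) := by
    ring
  have : 0 < 4 * (x - y) ^ 3 * (x + y) := by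
    have : 0 < x - y := by linarith
    have : 0 < x + y := by linarith
    positivity
  have hx : 0 < x := by linarith
  refine (pow_lt_pow_iff_left₀ (by positivity) (by positivity) two_ne_zero).mp ?_
  rw [mul_pow, Real.sq_sqrt (by positivity)]
  linarith

end

/-- for `x > y > 0` with `y ≥ ((√5−1)/4)·x` there are `s ≥ t ≥ 0` with
`2s + t = x + 2y`, `2s³ + t³ = x³ + 2y³` and `2s⁴ + t⁴ < x⁴ + 2y⁴`; moreover one may
take `s = (2x + 3y − √(y(4x+5y)))/2` and `t = x + 2y − 2s`. -/
theorem stmt_13 (x y : ℝ) (hxy : y < x) (hy : 0 < y)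
    (hlb : ((Real.sqrt 5 - 1) / 4) * x ≤ y) :
    ∃ s t : ℝ, t ≤ s ∧ 0 ≤ t ∧ 2 * s + t = x + 2 * y ∧
      2 * s ^ 3 + t ^ 3 = x ^ 3 + 2 * y ^ 3 ∧
      2 * s ^ 4 + t ^ 4 < x ^ 4 + 2 * y ^ 4 ∧
      s = (2 * x + 3 * y - Real.sqrt (y * (4 * x + 5 * y))) / 2 ∧
      t = x + 2 * y - 2 * s := by
  have hx : 0 < x := hy.trans hxy
  set r := √(y * (4 * x + 5 * y))
  have hr : r ^ 2 = y * (4 * x + 5 * y) := Real.sq_sqrt (by positivity)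
  obtain ⟨s, hs⟩ : ∃ s, s = (2 * x + 3 * y - r) / 2 := ⟨_, rfl⟩
  obtain ⟨t, ht⟩ : ∃ t, t = r - x - y := ⟨_, rfl⟩
  have ht_nonneg : 0 ≤ t := by linarith [add_le_sqrt_of_golden_le (by linarith) hlb]
  have ht_le : t ≤ s := by linarith [three_mul_sqrt_le hy.le hxy.le]
  have h₃ : s ^ 3 + s ^ 3 + t ^ 3 = x ^ 3 + y ^ 3 + y ^ 3 := by
    rw [hs, ht]; linear_combination (3 / 4 * r - 3 / 4 * y - 3 / 2 * x) * hr
  have he₂ : 4 * (s * s + s * t + t * s)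
      = 2 * r * (4 * x + 5 * y) - 4 * x ^ 2 - 20 * x * y - 18 * y ^ 2 := by
    rw [hs, ht]; linear_combination (-3) * hr
  have h₄ := sum_pow_four_lt_of_sum_eq_of_sum_pow_three_eq (by linarith) h₃ (by nlinarith)
    (by nlinarith [sqrt_mul_add_lt hy hxy])
  exact ⟨s, t, ht_le, ht_nonneg, by linarith, by linarith, by linarith, hs, by linarith⟩
end

section
/- For all real numbers x, y the polynomial identity y(4x+5y)(8x³+50x²y+86xy²+45y³)² − (2x⁴+52x³y+180x²y²+232xy³+101y⁴)² = 4(x−y)³(19y⁵+73xy⁴+98x²y³+54x³y²+9x⁴y−x⁵) holds. Consequently, if x > y > 0 and y ≥ ((√5−1)/4)·x, then (8x³+50x²y+86xy²+45y³)·√(y(4x+5y)) > 2x⁴+52x³y+180x²y²+232xy³+101y⁴. -/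
/-! Squaring turns the inequality into `y(4x+5y)A² − B² > 0`, and the identity factors this
difference as `4(x−y)³Q(x,y)`. For `x > y > 0` the cube is positive, and every monomial of `Q`
is positive except `−x⁵`, which `9x⁴y` dominates as soon as `y > x/9`; the hypothesis
`y ≥ ((√5−1)/4)x` gives this because `(√5−1)/4 > 1/9`. -/

theorem sq_mul_sub_sq_eq_cube_mul (x y : ℝ) :
    y * (4 * x + 5 * y) * (8 * x ^ 3 + 50 * x ^ 2 * y + 86 * x * y ^ 2 + 45 * y ^ 3) ^ 2 -
        (2 * x ^ 4 + 52 * x ^ 3 * y + 180 * x ^ 2 * y ^ 2 + 232 * x * y ^ 3 + 101 * y ^ 4) ^ 2 =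
      4 * (x - y) ^ 3 *
        (19 * y ^ 5 + 73 * x * y ^ 4 + 98 * x ^ 2 * y ^ 3 + 54 * x ^ 3 * y ^ 2 +
          9 * x ^ 4 * y - x ^ 5) := by
  ring

theorem lt_nine_mul_of_golden_le {x y : ℝ} (hx : 0 < x) (h : (Real.sqrt 5 - 1) / 4 * x ≤ y) :
    x < 9 * y := by
  have hsqrt : (13 : ℝ) / 9 < Real.sqrt 5 := by
    rw [Real.lt_sqrt (by norm_num)]
    norm_num
  nlinarith [mul_lt_mul_of_pos_right hsqrt hx]

theorem quintic_pos {x y : ℝ} (hx : 0 < x) (hy : 0 < y) (hxy : x < 9 * y) :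
    0 < 19 * y ^ 5 + 73 * x * y ^ 4 + 98 * x ^ 2 * y ^ 3 + 54 * x ^ 3 * y ^ 2 +
      9 * x ^ 4 * y - x ^ 5 := by
  have h9 : 0 < 9 * y - x := sub_pos.2 hxy
  calc (0 : ℝ) < 19 * y ^ 5 + 73 * x * y ^ 4 + 98 * x ^ 2 * y ^ 3 + 54 * x ^ 3 * y ^ 2 +
        x ^ 4 * (9 * y - x) := by positivity
    _ = _ := by ring

/-- the polynomial identity
`y(4x+5y)(8x³+50x²y+86xy²+45y³)² − (2x⁴+52x³y+180x²y²+232xy³+101y⁴)²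
  = 4(x−y)³(19y⁵+73xy⁴+98x²y³+54x³y²+9x⁴y−x⁵)`
holds for all reals; consequently, for `x > y > 0` with `y ≥ ((√5−1)/4)·x`,
`(8x³+50x²y+86xy²+45y³)·√(y(4x+5y)) > 2x⁴+52x³y+180x²y²+232xy³+101y⁴`. -/
theorem stmt_15 :
    (∀ x y : ℝ,
      y * (4 * x + 5 * y) * (8 * x ^ 3 + 50 * x ^ 2 * y + 86 * x * y ^ 2 + 45 * y ^ 3) ^ 2 -
          (2 * x ^ 4 + 52 * x ^ 3 * y + 180 * x ^ 2 * y ^ 2 + 232 * x * y ^ 3 +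
            101 * y ^ 4) ^ 2 =
        4 * (x - y) ^ 3 *
          (19 * y ^ 5 + 73 * x * y ^ 4 + 98 * x ^ 2 * y ^ 3 + 54 * x ^ 3 * y ^ 2 +
            9 * x ^ 4 * y - x ^ 5)) ∧
    (∀ x y : ℝ, y < x → 0 < y → ((Real.sqrt 5 - 1) / 4) * x ≤ y →
      (8 * x ^ 3 + 50 * x ^ 2 * y + 86 * x * y ^ 2 + 45 * y ^ 3) *
          Real.sqrt (y * (4 * x + 5 * y)) >
        2 * x ^ 4 + 52 * x ^ 3 * y + 180 * x ^ 2 * y ^ 2 + 232 * x * y ^ 3 +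
          101 * y ^ 4) := by
  refine ⟨sq_mul_sub_sq_eq_cube_mul, fun x y hyx hy hgolden => ?_⟩
  have hx : 0 < x := hy.trans hyx
  have hdiff := mul_pos (mul_pos four_pos (pow_pos (sub_pos.2 hyx) 3))
    (quintic_pos hx hy (lt_nine_mul_of_golden_le hx hgolden))
  rw [← sq_mul_sub_sq_eq_cube_mul] at hdiff
  apply lt_of_pow_lt_pow_left₀ 2 (by positivity)
  rw [mul_pow, Real.sq_sqrt (by positivity)]
  linarith
end

section
/- Fix 0 < C < 1. Let w = (w₁,…,w_m) be a vector of positive reals with Σᵢ wᵢ = 1 and Σᵢ wᵢ³ = C, and suppose w minimizes the sum of fourth powers among all such vectors: for every k and every vector v = (v₁,…,v_k) of positive reals with Σᵢ vᵢ = 1 and Σᵢ vᵢ³ = C, one has Σᵢ wᵢ⁴ ≤ Σᵢ vᵢ⁴. Then there exist reals a ≥ b > 0 such that at least m−1 of the coordinates of w equal a and any remaining coordinate equals b. -/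
/-!
Let `w` be a minimizer and suppose `w i ≤ w j < w k` for distinct `i, j, k`. Write `x, y, z` for
these coordinates and `e₁, e₂, e₃` for their elementary symmetric functions. For small `ε > 0`
the perturbed cubic `(t - x)(t - y)(t - z) = ε (t - e₁)` still has three positive roots, by the
intermediate value theorem. By Vieta they have symmetric functions `e₁`, `e₂ - ε`, `e₃ - e₁ ε`, so
replacing `x, y, z` by them keeps the sum and the sum of cubes, while the sum of fourth powers
changes by `2ε(ε - 2e₂) < 0`. Hence no such triple exists, and every coordinate but one minimal
one equals the maximal coordinate.
-/

open Finset Function Filter Topology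

theorem vieta_of_three_roots {K : Type*} [Field K] {r₁ r₂ r₃ e₁ e₂ e₃ : K}
    (h₁₂ : r₁ ≠ r₂) (h₁₃ : r₁ ≠ r₃) (h₂₃ : r₂ ≠ r₃)
    (H₁ : r₁ ^ 3 - e₁ * r₁ ^ 2 + e₂ * r₁ - e₃ = 0)
    (H₂ : r₂ ^ 3 - e₁ * r₂ ^ 2 + e₂ * r₂ - e₃ = 0)
    (H₃ : r₃ ^ 3 - e₁ * r₃ ^ 2 + e₂ * r₃ - e₃ = 0) :
    r₁ + r₂ + r₃ = e₁ ∧ r₁ * r₂ + r₁ * r₃ + r₂ * r₃ = e₂ ∧ r₁ * r₂ * r₃ = e₃ := by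
  have h₁₂' := sub_ne_zero.mpr h₁₂
  have h₁₃' := sub_ne_zero.mpr h₁₃
  have h₂₃' := sub_ne_zero.mpr h₂₃
  have D₁₂ : r₁ ^ 2 + r₁ * r₂ + r₂ ^ 2 - e₁ * (r₁ + r₂) + e₂ = 0 :=
    (mul_eq_zero.mp (by linear_combination H₁ - H₂ : (r₁ - r₂) * _ = 0)).resolve_left h₁₂'
  have D₁₃ : r₁ ^ 2 + r₁ * r₃ + r₃ ^ 2 - e₁ * (r₁ + r₃) + e₂ = 0 :=
    (mul_eq_zero.mp (by linear_combination H₁ - H₃ : (r₁ - r₃) * _ = 0)).resolve_left h₁₃'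
  have S : r₁ + r₂ + r₃ - e₁ = 0 :=
    (mul_eq_zero.mp (by linear_combination D₁₂ - D₁₃ : (r₂ - r₃) * _ = 0)).resolve_left h₂₃'
  refine ⟨by linear_combination S, by linear_combination (r₁ + r₂) * S - D₁₂, ?_⟩
  linear_combination H₁ - r₁ ^ 2 * S + r₁ * ((r₁ + r₂) * S - D₁₂)

theorem power_sums_of_perturbed_cubic_roots {K : Type*} [Field K] {x y z ε r₁ r₂ r₃ : K}
    (h₁₂ : r₁ ≠ r₂) (h₁₃ : r₁ ≠ r₃) (h₂₃ : r₂ ≠ r₃)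
    (hr₁ : (r₁ - x) * (r₁ - y) * (r₁ - z) = ε * (r₁ - (x + y + z)))
    (hr₂ : (r₂ - x) * (r₂ - y) * (r₂ - z) = ε * (r₂ - (x + y + z)))
    (hr₃ : (r₃ - x) * (r₃ - y) * (r₃ - z) = ε * (r₃ - (x + y + z))) :
    r₁ + r₂ + r₃ = x + y + z ∧ r₁ ^ 3 + r₂ ^ 3 + r₃ ^ 3 = x ^ 3 + y ^ 3 + z ^ 3 ∧
      r₁ ^ 4 + r₂ ^ 4 + r₃ ^ 4 =
        x ^ 4 + y ^ 4 + z ^ 4 + 2 * ε * (ε - 2 * (x * y + x * z + y * z)) := by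
  obtain ⟨e₁, e₂, e₃⟩ := vieta_of_three_roots (e₁ := x + y + z)
    (e₂ := x * y + x * z + y * z - ε) (e₃ := x * y * z - (x + y + z) * ε) h₁₂ h₁₃ h₂₃
    (by linear_combination hr₁) (by linear_combination hr₂) (by linear_combination hr₃)
  have p₃ (a b c : K) : a ^ 3 + b ^ 3 + c ^ 3 =
      (a + b + c) ^ 3 - 3 * (a + b + c) * (a * b + a * c + b * c) + 3 * (a * b * c) := by ring
  have p₄ (a b c : K) : a ^ 4 + b ^ 4 + c ^ 4 = (a + b + c) ^ 4
      - 4 * (a + b + c) ^ 2 * (a * b + a * c + b * c) + 2 * (a * b + a * c + b * c) ^ 2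
      + 4 * (a + b + c) * (a * b * c) := by ring
  refine ⟨e₁, ?_, ?_⟩
  · rw [p₃, p₃ x, e₁, e₂, e₃]; ring
  · rw [p₄, p₄ x, e₁, e₂, e₃]; ring

theorem exists_triple_sum_eq_sum_cube_eq_sum_pow_four_lt {x y z : ℝ} (hx : 0 < x) (hxy : x ≤ y)
    (hyz : y < z) :
    ∃ r₁ r₂ r₃ : ℝ, 0 < r₁ ∧ 0 < r₂ ∧ 0 < r₃ ∧ r₁ + r₂ + r₃ = x + y + z ∧
      r₁ ^ 3 + r₂ ^ 3 + r₃ ^ 3 = x ^ 3 + y ^ 3 + z ^ 3 ∧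
      r₁ ^ 4 + r₂ ^ 4 + r₃ ^ 4 < x ^ 4 + y ^ 4 + z ^ 4 := by
  set s := x + y + z with hs
  set q := x * y + x * z + y * z
  set m := (y + z) / 2 with hm
  have hy : 0 < y := hx.trans_le hxy
  have hz : 0 < z := hy.trans hyz
  have hmy : y < m := by linarith
  have hms : m < s := by linarith
  have hlim (c : ℝ) : Tendsto (fun ε => ε * c) (𝓝[>] 0) (𝓝 0) := by
    simpa using ((continuous_mul_const c).tendsto 0).mono_left nhdsWithin_le_nhds
  obtain ⟨ε, hε, h₀, hεm, hq⟩ : ∃ ε, 0 < ε ∧ ε * s < x * y * z ∧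
      ε * (s - m) < (m - x) * (m - y) * (z - m) ∧ ε * 1 < 2 * q :=
    (eventually_mem_nhdsWithin.and <| ((hlim s).eventually_lt_const (by positivity)).and <|
      ((hlim (s - m)).eventually_lt_const (by apply mul_pos (mul_pos _ _) <;> linarith)).and <|
      (hlim 1).eventually_lt_const (by positivity)).exists
  set Q : ℝ → ℝ := fun t => (t - x) * (t - y) * (t - z) - ε * (t - s)
  have hQ : Continuous Q := by fun_prop
  have hQ₀ : Q 0 < 0 := by linear_combination h₀
  have hQy : 0 < Q y := by linear_combination (mul_pos hε (by linarith : 0 < x + z))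
  have hQm : Q m < 0 := by linear_combination hεm
  have hQs : 0 < Q s := by
    linear_combination (by positivity : 0 < (y + z) * (x + z) * (x + y))
  obtain ⟨r₁, ⟨hr₁0, hr₁y⟩, hr₁⟩ := intermediate_value_Ioo hy.le hQ.continuousOn ⟨hQ₀, hQy⟩
  obtain ⟨r₂, ⟨hr₂y, hr₂m⟩, hr₂⟩ := intermediate_value_Ioo' hmy.le hQ.continuousOn ⟨hQm, hQy⟩
  obtain ⟨r₃, ⟨hr₃m, -⟩, hr₃⟩ := intermediate_value_Ioo hms.le hQ.continuousOn ⟨hQm, hQs⟩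
  obtain ⟨h₁, h₃, h₄⟩ := power_sums_of_perturbed_cubic_roots (by linarith) (by linarith)
    (by linarith) (sub_eq_zero.mp hr₁) (sub_eq_zero.mp hr₂) (sub_eq_zero.mp hr₃)
  refine ⟨r₁, r₂, r₃, hr₁0, by linarith, by linarith, h₁, h₃, ?_⟩
  nlinarith

theorem sum_comp_update {ι α β : Type*} [Fintype ι] [DecidableEq ι] [AddCommGroup β]
    (g : α → β) (f : ι → α) (i : ι) (b : α) :
    ∑ l, g (update f i b l) = ∑ l, g (f l) + (g b - g (f i)) := by
  rw [← sum_erase_add _ _ (mem_univ i), ← sum_erase_add _ _ (mem_univ i), update_self,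
    sum_congr rfl fun l hl => by rw [update_of_ne (ne_of_mem_erase hl)]]
  abel

theorem not_lt_of_isMinimizer {ι : Type*} [Fintype ι] [DecidableEq ι] {w : ι → ℝ}
    (hpos : ∀ i, 0 < w i)
    (hmin : ∀ v : ι → ℝ, (∀ i, 0 < v i) → ∑ i, v i = ∑ i, w i →
      ∑ i, v i ^ 3 = ∑ i, w i ^ 3 → ∑ i, w i ^ 4 ≤ ∑ i, v i ^ 4)
    {i j k : ι} (hij : i ≠ j) (hik : i ≠ k) (hjk : j ≠ k) (hle : w i ≤ w j) : ¬ w j < w k := by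
  intro hlt
  obtain ⟨r₁, r₂, r₃, h₁, h₂, h₃, hs₁, hs₃, hs₄⟩ :=
    exists_triple_sum_eq_sum_cube_eq_sum_pow_four_lt (hpos i) hle hlt
  set v := update (update (update w i r₁) j r₂) k r₃
  have hv (g : ℝ → ℝ) : ∑ l, g (v l) = ∑ l, g (w l) + (g r₁ + g r₂ + g r₃)
      - (g (w i) + g (w j) + g (w k)) := by
    simp only [v, sum_comp_update, update_of_ne hjk.symm, update_of_ne hik.symm,
      update_of_ne hij.symm]
    ring
  have hvpos : ∀ l, 0 < v l := by
    intro l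
    simp only [v, update_apply]
    split_ifs <;> first | assumption | exact hpos l
  have := hmin v hvpos (by rw [hv fun t => t]; linarith)
    (by rw [hv (· ^ 3)]; linarith)
  rw [hv (· ^ 4)] at this
  linarith

theorem exists_forall_ne_eq_of_forall_not_lt {ι α : Type*} [Finite ι] [Nonempty ι] [LinearOrder α]
    (w : ι → α) (h : ∀ i j k, i ≠ j → i ≠ k → j ≠ k → w i ≤ w j → ¬ w j < w k) :
    ∃ i₀ a, w i₀ ≤ a ∧ ∀ i, i ≠ i₀ → w i = a := by
  obtain ⟨i₀, hi₀⟩ := Finite.exists_min w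
  obtain ⟨k, hk⟩ := Finite.exists_max w
  refine ⟨i₀, w k, hk i₀, fun i hi => (hk i).eq_of_not_lt fun hlt => ?_⟩
  have hik : i ≠ k := by rintro rfl; exact hlt.false
  have hi₀k : i₀ ≠ k := by rintro rfl; exact (hlt.trans_le (hi₀ i)).false
  exact h i₀ i k hi.symm hi₀k hik (hi₀ i) hlt

open Classical in
theorem stmt_16_general (C : ℝ) (m : ℕ) (w : Fin m → ℝ)
    (hpos : ∀ i, 0 < w i) (hsum : ∑ i, w i = 1) (hcube : ∑ i, w i ^ 3 = C)
    (hmin : ∀ (k : ℕ) (v : Fin k → ℝ), (∀ i, 0 < v i) → ∑ i, v i = 1 →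
      ∑ i, v i ^ 3 = C → ∑ i, w i ^ 4 ≤ ∑ i, v i ^ 4) :
    ∃ a b : ℝ, b ≤ a ∧ 0 < b ∧ (∀ i, w i = a ∨ w i = b) ∧
      m - 1 ≤ (Finset.univ.filter (fun i => w i = a)).card := by
  have : Nonempty (Fin m) := by
    refine Fin.pos_iff_nonempty.mp (Nat.pos_of_ne_zero ?_)
    rintro rfl
    simp at hsum
  obtain ⟨i₀, a, hle, heq⟩ := exists_forall_ne_eq_of_forall_not_lt w fun i j k =>
    not_lt_of_isMinimizer hpos fun v hv h₁ h₃ => hmin m v hv (h₁.trans hsum) (h₃.trans hcube)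
  refine ⟨a, w i₀, hle, hpos i₀, fun i => ?_, ?_⟩
  · by_cases hi : i = i₀
    · exact .inr (congrArg w hi)
    · exact .inl (heq i hi)
  · calc m - 1 = #(univ.erase i₀) := by simp
      _ ≤ _ := card_le_card fun i hi => by simp [heq i (ne_of_mem_erase hi)]

open Classical in
/-- any minimizer of the sum of fourth powers among positive vectors
with prescribed sum `1` and sum of cubes `C ∈ (0,1)` has all coordinates equal to
some `a`, except possibly one coordinate equal to some `b` with `a ≥ b > 0`. -/
theorem stmt_16 (C : ℝ) (hC0 : 0 < C) (hC1 : C < 1) (m : ℕ) (w : Fin m → ℝ)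
    (hpos : ∀ i, 0 < w i) (hsum : ∑ i, w i = 1) (hcube : ∑ i, w i ^ 3 = C)
    (hmin : ∀ (k : ℕ) (v : Fin k → ℝ), (∀ i, 0 < v i) → ∑ i, v i = 1 →
      ∑ i, v i ^ 3 = C → ∑ i, w i ^ 4 ≤ ∑ i, v i ^ 4) :
    ∃ a b : ℝ, b ≤ a ∧ 0 < b ∧ (∀ i, w i = a ∨ w i = b) ∧
      m - 1 ≤ (Finset.univ.filter (fun i => w i = a)).card :=
  stmt_16_general C m w hpos hsum hcube hmin
end
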